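/- Let k be a totally ordered tropical semifield, M a k-module, and η : M → k a lattice-preserving homomorphism that is not the zero homomorphism. Then η is an extremal element of the dual module M∨. -/

import Mathlib

/-! # Tropical semifields and tropical modules -/

/-- A tropical semifield: a commutative semiring with idempotent addition
(`⊕` is `+`, `⊙` is `*`, the zero element `−∞` is `0`, the unity is `1`)
in which every nonzero element has a multiplicative inverse. -/
class TropSemifield (k : Type*) extends CommSemiring k where
  add_idem : ∀ a : k, a + a = a
  exists_inv : ∀ a : k, a ≠ 0 → ∃ b : k, a * b = 1

/-- A tropical semigroup: commutative idempotent monoid, written additively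
(the zero element is `−∞`). -/
class TropSemigroup (M : Type*) extends AddCommMonoid M where
  add_idem : ∀ v : M, v + v = v

/-- A module over a tropical semifield. -/
class TropModule (k : Type*) (M : Type*) [TropSemifield k] [TropSemigroup M] extends
    SMul k M where
  mul_smul : ∀ (a b : k) (v : M), (a * b) • v = a • b • v
  one_smul : ∀ v : M, (1 : k) • v = v
  add_smul : ∀ (a b : k) (v : M), (a + b) • v = a • v + b • v
  smul_add : ∀ (a : k) (v w : M), a • (v + w) = a • v + a • w
  zero_smul : ∀ v : M, (0 : k) • v = 0
  smul_zero : ∀ a : k, a • (0 : M) = 0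

/-- The canonical partial order `v ≤ w ↔ v ⊕ w = w`. -/
def tle {M : Type*} [Add M] (v w : M) : Prop := v + w = w

/-- Strict version of the canonical order. -/
def tlt {M : Type*} [Add M] (v w : M) : Prop := tle v w ∧ v ≠ w

/-- The canonical order of `k` is total. -/
def TotallyOrderedTSF (k : Type*) [TropSemifield k] : Prop :=
  ∀ a b : k, tle a b ∨ tle b a

/-- Every nonempty subset of `k` admits an infimum. -/
def QuasiCompleteTSF (k : Type*) [TropSemifield k] : Prop :=
  ∀ S : Set k, S.Nonempty →
    ∃ c : k, (∀ x ∈ S, tle c x) ∧ ∀ d : k, (∀ x ∈ S, tle d x) → tle d c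

/-- `k` is rational: `m`-th roots exist and `k` has no maximum element. -/
def RationalTSF (k : Type*) [TropSemifield k] : Prop :=
  (∀ (a : k) (m : ℕ), m ≠ 0 → ∃ b : k, b ^ m = a) ∧ ∀ a : k, ∃ b : k, tlt a b

instance (priority := 100) TropSemifield.toTropSemigroup (k : Type*) [TropSemifield k] :
    TropSemigroup k :=
  { (inferInstance : AddCommMonoid k) with add_idem := TropSemifield.add_idem }

instance TropModule.self (k : Type*) [TropSemifield k] : TropModule k k :=
  { (inferInstance : SMul k k) with
    mul_smul := fun a b v => mul_assoc a b v
    one_smul := fun v => one_mul v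
    add_smul := fun a b v => add_mul a b v
    smul_add := fun a v w => mul_add a v w
    zero_smul := fun v => zero_mul v
    smul_zero := fun a => mul_zero a }

instance TropSemigroup.pi {ι : Type*} (M : Type*) [TropSemigroup M] :
    TropSemigroup (ι → M) :=
  { Pi.addCommMonoid with add_idem := fun v => funext fun i => TropSemigroup.add_idem (v i) }

instance TropModule.pi (k : Type*) {ι : Type*} (M : Type*) [TropSemifield k] [TropSemigroup M]
    [TropModule k M] : TropModule k (ι → M) where
  smul a v := fun i => a • v i
  mul_smul a b v := funext fun i => TropModule.mul_smul a b (v i)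
  one_smul v := funext fun i => TropModule.one_smul (v i)
  add_smul a b v := funext fun i => TropModule.add_smul a b (v i)
  smul_add a v w := funext fun i => TropModule.smul_add a (v i) (w i)
  zero_smul v := funext fun i => TropModule.zero_smul (v i)
  smul_zero a := funext fun i => TropModule.smul_zero (a := a)

/-! ## Homomorphisms of tropical modules -/

/-- A homomorphism of `k`-modules. -/
structure TropHom (k : Type*) (M : Type*) (N : Type*) [TropSemifield k] [TropSemigroup M]
    [TropModule k M] [TropSemigroup N] [TropModule k N] where
  toFun : M → N
  map_zero' : toFun 0 = 0
  map_add' : ∀ v w : M, toFun (v + w) = toFun v + toFun w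
  map_smul' : ∀ (a : k) (v : M), toFun (a • v) = a • toFun v

namespace TropHom

variable {k M N : Type*} [TropSemifield k] [TropSemigroup M] [TropModule k M]
  [TropSemigroup N] [TropModule k N]

theorem ext' {f g : TropHom k M N} (h : ∀ v, f.toFun v = g.toFun v) : f = g := by
  cases f; cases g
  simp only [mk.injEq]
  exact funext h

instance : Zero (TropHom k M N) :=
  ⟨⟨fun _ => 0, rfl, fun _ _ => (add_zero (0 : N)).symm,
    fun a _ => (TropModule.smul_zero (M := N) a).symm⟩⟩

instance : Add (TropHom k M N) :=
  ⟨fun f g =>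
    { toFun := fun v => f.toFun v + g.toFun v
      map_zero' := by
        show f.toFun 0 + g.toFun 0 = 0
        rw [f.map_zero', g.map_zero', add_zero]
      map_add' := fun v w => by
        show f.toFun (v + w) + g.toFun (v + w) =
          (f.toFun v + g.toFun v) + (f.toFun w + g.toFun w)
        rw [f.map_add', g.map_add', add_add_add_comm]
      map_smul' := fun a v => by
        show f.toFun (a • v) + g.toFun (a • v) = a • (f.toFun v + g.toFun v)
        rw [f.map_smul', g.map_smul', TropModule.smul_add] }⟩

instance : SMul k (TropHom k M N) :=
  ⟨fun a f =>
    { toFun := fun v => a • f.toFun v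
      map_zero' := by
        show a • f.toFun 0 = 0
        rw [f.map_zero', TropModule.smul_zero]
      map_add' := fun v w => by
        show a • f.toFun (v + w) = a • f.toFun v + a • f.toFun w
        rw [f.map_add', TropModule.smul_add]
      map_smul' := fun b v => by
        show a • f.toFun (b • v) = b • (a • f.toFun v)
        rw [f.map_smul', ← TropModule.mul_smul, ← TropModule.mul_smul, mul_comm a b] }⟩

instance : TropSemigroup (TropHom k M N) where
  add := (· + ·)
  zero := 0
  add_assoc f g h := ext' fun v => add_assoc (f.toFun v) (g.toFun v) (h.toFun v)
  zero_add f := ext' fun v => zero_add (f.toFun v)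
  add_zero f := ext' fun v => add_zero (f.toFun v)
  add_comm f g := ext' fun v => add_comm (f.toFun v) (g.toFun v)
  nsmul := nsmulRec
  add_idem f := ext' fun v => TropSemigroup.add_idem (f.toFun v)

instance : TropModule k (TropHom k M N) where
  smul := (· • ·)
  mul_smul a b f := ext' fun v => TropModule.mul_smul a b (f.toFun v)
  one_smul f := ext' fun v => TropModule.one_smul (f.toFun v)
  add_smul a b f := ext' fun v => TropModule.add_smul a b (f.toFun v)
  smul_add a f g := ext' fun v => TropModule.smul_add a (f.toFun v) (g.toFun v)
  zero_smul f := ext' fun v => TropModule.zero_smul (f.toFun v)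
  smul_zero a := ext' fun v => TropModule.smul_zero (M := N) a

end TropHom

/-- The canonical map `M → (M∨)∨`, `v ↦ (ξ ↦ ⟨v, ξ⟩)`. -/
def iotaFun (k : Type*) (M : Type*) [TropSemifield k] [TropSemigroup M] [TropModule k M] :
    M → TropHom k (TropHom k M k) k :=
  fun v => ⟨fun ξ => ξ.toFun v, rfl, fun ξ η => rfl, fun a ξ => rfl⟩

/-! ## Order-theoretic notions -/

/-- `z` is the infimum of `v` and `w` w.r.t. the canonical order. -/
def IsTInf {M : Type*} [Add M] (v w z : M) : Prop :=
  tle z v ∧ tle z w ∧ ∀ y : M, tle y v → tle y w → tle y z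

/-- A tropical module is straight if it is a finitely distributive ordered lattice. -/
def Straight (M : Type*) [Add M] : Prop :=
  (∀ v w : M, ∃ z : M, IsTInf v w z) ∧
    ∀ v₁ v₂ w z₁ z₂ : M, IsTInf v₁ w z₁ → IsTInf v₂ w z₂ → IsTInf (v₁ + v₂) w (z₁ + z₂)

/-- Infimum of `v` and `w` within the subset `N`. -/
def IsTInfOn {M : Type*} [Add M] (N : Set M) (v w z : M) : Prop :=
  tle z v ∧ tle z w ∧ ∀ y ∈ N, tle y v → tle y w → tle y z

/-- A submodule (viewed as a subset) is straight. -/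
def StraightSet {M : Type*} [Add M] (N : Set M) : Prop :=
  (∀ v ∈ N, ∀ w ∈ N, ∃ z ∈ N, IsTInfOn N v w z) ∧
    ∀ v₁ ∈ N, ∀ v₂ ∈ N, ∀ w ∈ N, ∀ z₁ ∈ N, ∀ z₂ ∈ N,
      IsTInfOn N v₁ w z₁ → IsTInfOn N v₂ w z₂ → IsTInfOn N (v₁ + v₂) w (z₁ + z₂)

/-! ## Generation, bases, extremal elements -/

/-- `S` generates the `k`-module `M`. -/
def TGenerates (k : Type*) {M : Type*} [TropSemifield k] [TropSemigroup M] [TropModule k M]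
    (S : Set M) : Prop :=
  ∀ v : M, ∃ (r : ℕ) (a : Fin r → k) (x : Fin r → M), (∀ i, x i ∈ S) ∧ v = ∑ i, a i • x i

/-- `M` is finitely generated. -/
def TFG (k : Type*) (M : Type*) [TropSemifield k] [TropSemigroup M] [TropModule k M] : Prop :=
  ∃ S : Finset M, TGenerates k (↑S : Set M)

/-- A basis: a generating set no proper subset of which generates. -/
def TBasis (k : Type*) {M : Type*} [TropSemifield k] [TropSemigroup M] [TropModule k M]
    (S : Set M) : Prop :=
  TGenerates k S ∧ ∀ T : Set M, T ⊂ S → ¬ TGenerates k T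

/-- `S` generates the subset `N` (viewed as a submodule of `M`). -/
def TGeneratesOn (k : Type*) {M : Type*} [TropSemifield k] [TropSemigroup M] [TropModule k M]
    (N S : Set M) : Prop :=
  ∀ v ∈ N, ∃ (r : ℕ) (a : Fin r → k) (x : Fin r → M), (∀ i, x i ∈ S) ∧ v = ∑ i, a i • x i

/-- A basis of the submodule `N ⊆ M`. -/
def TBasisOn (k : Type*) {M : Type*} [TropSemifield k] [TropSemigroup M] [TropModule k M]
    (N S : Set M) : Prop :=
  S ⊆ N ∧ TGeneratesOn k N S ∧ ∀ T : Set M, T ⊂ S → ¬ TGeneratesOn k N T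

/-- An extremal element. -/
def TExtremal {M : Type*} [Add M] [Zero M] (e : M) : Prop :=
  e ≠ 0 ∧ ∀ v w : M, v + w = e → v = e ∨ w = e

/-- The ray `k ⊙ e` generated by an element. -/
def tray (k : Type*) {M : Type*} [TropSemifield k] [TropSemigroup M] [TropModule k M]
    (e : M) : Set M :=
  Set.range fun a : k => a • e

/-- The set of extremal rays of `M`. -/
def extRays (k : Type*) (M : Type*) [TropSemifield k] [TropSemigroup M] [TropModule k M] :
    Set (Set M) :=
  {R : Set M | ∃ e : M, TExtremal e ∧ R = tray k e}

/-- The dimension of a straight reflexive module: the number of extremal rays. -/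
noncomputable def tdim (k : Type*) (M : Type*) [TropSemifield k] [TropSemigroup M]
    [TropModule k M] : ℕ :=
  (extRays k M).ncard

/-! ## Further notions on homomorphisms -/

/-- A lightly surjective homomorphism. -/
def LightlySurjective {k M N : Type*} [TropSemifield k] [TropSemigroup M] [TropModule k M]
    [TropSemigroup N] [TropModule k N] (α : TropHom k M N) : Prop :=
  ∀ w : N, ∃ v : M, tle w (α.toFun v)

/-- A lattice-preserving homomorphism. -/
def LatticePreserving {k M N : Type*} [TropSemifield k] [TropSemigroup M] [TropModule k M]
    [TropSemigroup N] [TropModule k N] (α : TropHom k M N) : Prop :=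
  ∀ v w : M, ∀ x : N, tle x (α.toFun v) → tle x (α.toFun w) →
    ∃ y : M, tle y v ∧ tle y w ∧ tle x (α.toFun y)

/-- The inclusion of the subset `N` into the ambient module is lattice-preserving. -/
def LatPresSet {M : Type*} [Add M] (N : Set M) : Prop :=
  ∀ v ∈ N, ∀ w ∈ N, ∀ x : M, tle x v → tle x w → ∃ y ∈ N, tle y v ∧ tle y w ∧ tle x y

/-- `η` is the dual element of `e`: `⟨e,η⟩ = 0` and
`⟨v,η⟩ ⊙ ⟨e,ξ⟩ ≤ ⟨v,ξ⟩` for all `v`, `ξ`. -/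
def IsDualElement {k M : Type*} [TropSemifield k] [TropSemigroup M] [TropModule k M]
    (e : M) (η : TropHom k M k) : Prop :=
  η.toFun e = 1 ∧ ∀ (v : M) (ξ : TropHom k M k), tle (η.toFun v * ξ.toFun e) (ξ.toFun v)

/-! ## Locators -/

/-- A locator of `M`: a lower-saturated subsemigroup of `(M, ⊕)` that generates `M`. -/
structure IsLocator (k : Type*) {M : Type*} [TropSemifield k] [TropSemigroup M] [TropModule k M]
    (S : Set M) : Prop where
  lower : ∀ v w : M, tle v w → w ∈ S → v ∈ S
  add_mem : ∀ v ∈ S, ∀ w ∈ S, v + w ∈ S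
  generates : TGenerates k S

/-- The multiplicative inverse `⊘a` (junk value `−∞` at `−∞`). -/
noncomputable def tinv {k : Type*} [TropSemifield k] (a : k) : k := by
  classical exact if h : a = 0 then 0 else Classical.choose (TropSemifield.exists_inv a h)

/-- Scalar multiplication on locators: `a ⊙̌ S = (⊘a) ⊙ S` for `a ≠ −∞`, `(−∞) ⊙̌ S = M`. -/
noncomputable def locSMul {k M : Type*} [TropSemifield k] [TropSemigroup M] [TropModule k M]
    (a : k) (S : Set M) : Set M := by
  classical exact if a = 0 then Set.univ else (fun v => tinv a • v) '' S

/-- `U` is the infimum of the locators `S`, `T` in `Loc(M)` (whose canonical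
order is reverse inclusion, the sum being intersection). -/
def IsLocInf (k : Type*) {M : Type*} [TropSemifield k] [TropSemigroup M] [TropModule k M]
    (S T U : Set M) : Prop :=
  IsLocator k U ∧ S ⊆ U ∧ T ⊆ U ∧
    ∀ W : Set M, IsLocator k W → S ⊆ W → T ⊆ W → U ⊆ W

/-! ## Submodules -/

/-- A subset of a `k`-module which is a submodule. -/
structure IsTSubmodule (k : Type*) {M : Type*} [TropSemifield k] [TropSemigroup M]
    [TropModule k M] (N : Set M) : Prop where
  zero_mem : (0 : M) ∈ N
  add_mem : ∀ v ∈ N, ∀ w ∈ N, v + w ∈ N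
  smul_mem : ∀ (a : k), ∀ v ∈ N, a • v ∈ N

/-- A bundled submodule of a `k`-module. -/
structure TSub (k : Type*) (M : Type*) [TropSemifield k] [TropSemigroup M] [TropModule k M] where
  carrier : Set M
  zero_mem : (0 : M) ∈ carrier
  add_mem : ∀ v ∈ carrier, ∀ w ∈ carrier, v + w ∈ carrier
  smul_mem : ∀ (a : k), ∀ v ∈ carrier, a • v ∈ carrier

instance TSub.instZero {k M : Type*} [TropSemifield k] [TropSemigroup M] [TropModule k M]
    (N : TSub k M) : Zero ↥N.carrier :=
  ⟨⟨0, N.zero_mem⟩⟩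

instance TSub.instAdd {k M : Type*} [TropSemifield k] [TropSemigroup M] [TropModule k M]
    (N : TSub k M) : Add ↥N.carrier :=
  ⟨fun v w => ⟨v.1 + w.1, N.add_mem v.1 v.2 w.1 w.2⟩⟩

instance TSub.instSMul {k M : Type*} [TropSemifield k] [TropSemigroup M] [TropModule k M]
    (N : TSub k M) : SMul k ↥N.carrier :=
  ⟨fun a v => ⟨a • v.1, N.smul_mem a v.1 v.2⟩⟩

instance TSub.semigroup {k M : Type*} [TropSemifield k] [TropSemigroup M] [TropModule k M]
    (N : TSub k M) : TropSemigroup ↥N.carrier where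
  add := (· + ·)
  zero := 0
  add_assoc a b c := Subtype.ext (add_assoc a.1 b.1 c.1)
  zero_add a := Subtype.ext (zero_add a.1)
  add_zero a := Subtype.ext (add_zero a.1)
  add_comm a b := Subtype.ext (add_comm a.1 b.1)
  nsmul := nsmulRec
  add_idem a := Subtype.ext (TropSemigroup.add_idem a.1)

instance TSub.module {k M : Type*} [TropSemifield k] [TropSemigroup M] [TropModule k M]
    (N : TSub k M) : TropModule k ↥N.carrier where
  smul := (· • ·)
  mul_smul a b v := Subtype.ext (TropModule.mul_smul a b v.1)
  one_smul v := Subtype.ext (TropModule.one_smul v.1)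
  add_smul a b v := Subtype.ext (TropModule.add_smul a b v.1)
  smul_add a v w := Subtype.ext (TropModule.smul_add a v.1 w.1)
  zero_smul v := Subtype.ext (TropModule.zero_smul v.1)
  smul_zero a := Subtype.ext (TropModule.smul_zero (M := M) a)

/-! ## Linear combinations -/

theorem tsmul_sum {k M : Type*} [TropSemifield k] [TropSemigroup M] [TropModule k M]
    (a : k) {ι : Type*} (s : Finset ι) (f : ι → M) :
    a • (∑ i ∈ s, f i) = ∑ i ∈ s, a • f i := by
  classical
  induction s using Finset.induction_on with
  | empty => simpa using TropModule.smul_zero (M := M) a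
  | insert _ _ h ih => rw [Finset.sum_insert h, Finset.sum_insert h, TropModule.smul_add, ih]

/-- The homomorphism `kⁿ → M` sending the `i`-th standard basis element to `e i`. -/
def linComb {k M : Type*} [TropSemifield k] [TropSemigroup M] [TropModule k M] {n : ℕ}
    (e : Fin n → M) : TropHom k (Fin n → k) M where
  toFun v := ∑ i, v i • e i
  map_zero' :=
    (Finset.sum_congr rfl fun i _ => TropModule.zero_smul (e i)).trans Finset.sum_const_zero
  map_add' v w := by
    rw [← Finset.sum_add_distrib]
    exact Finset.sum_congr rfl fun i _ => TropModule.add_smul (v i) (w i) (e i)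
  map_smul' a v := by
    rw [tsmul_sum]
    exact Finset.sum_congr rfl fun i _ => TropModule.mul_smul a (v i) (e i)

/-- The homomorphism `M → kⁿ` induced by an `n`-tuple of elements of `M∨`. -/
def dualTuple {k M : Type*} [TropSemifield k] [TropSemigroup M] [TropModule k M] {n : ℕ}
    (η : Fin n → TropHom k M k) : TropHom k M (Fin n → k) where
  toFun v := fun i => (η i).toFun v
  map_zero' := funext fun i => (η i).map_zero'
  map_add' v w := funext fun i => (η i).map_add' v w
  map_smul' a v := funext fun i => (η i).map_smul' a v
section CanonicalOrder

variable {M : Type*} [TropSemigroup M]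

theorem tle_refl (a : M) : tle a a := TropSemigroup.add_idem a

theorem tle_antisymm {a b : M} (hab : tle a b) (hba : tle b a) : a = b := by
  unfold tle at *
  rw [← hba, add_comm, hab]

theorem tle_trans {a b c : M} (hab : tle a b) (hbc : tle b c) : tle a c := by
  unfold tle at *
  rw [← hbc, ← add_assoc, hab]

theorem tle_add_right (a b : M) : tle a (a + b) := by
  unfold tle
  rw [← add_assoc, TropSemigroup.add_idem]

theorem tle_add_left (a b : M) : tle b (a + b) :=
  add_comm b a ▸ tle_add_right b a

theorem add_tle_add {a a' b b' : M} (ha : tle a a') (hb : tle b b') : tle (a + b) (a' + b') := by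
  unfold tle at *
  rw [add_add_add_comm, ha, hb]

theorem eq_zero_of_tle_zero {a : M} (h : tle a 0) : a = 0 := by
  rwa [tle, add_zero] at h

end CanonicalOrder

theorem TropHom.tle_map {k M N : Type*} [TropSemifield k] [TropSemigroup M] [TropModule k M]
    [TropSemigroup N] [TropModule k N] (f : TropHom k M N) {v w : M} (h : tle v w) :
    tle (f.toFun v) (f.toFun w) := by
  rw [tle, ← f.map_add', h]

theorem TotallyOrderedTSF.add_tlt {k : Type*} [TropSemifield k] (hto : TotallyOrderedTSF k)
    {a b x : k} (ha : tlt a x) (hb : tlt b x) : tlt (a + b) x := by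
  rcases hto a b with hab | hba
  · rwa [hab]
  · rwa [add_comm, hba]

theorem TropHom.exists_map_eq_one_tlt {k M : Type*} [TropSemifield k] [TropSemigroup M]
    [TropModule k M] {ξ η : TropHom k M k} (hle : ∀ u, tle (ξ.toFun u) (η.toFun u))
    (hne : ξ ≠ η) : ∃ v, η.toFun v = 1 ∧ tlt (ξ.toFun v) 1 := by
  obtain ⟨v, hv⟩ : ∃ v, ξ.toFun v ≠ η.toFun v := by
    by_contra! h
    exact hne (TropHom.ext' h)
  have hηv : η.toFun v ≠ 0 := fun h0 => hv (by
    have hξv := hle v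
    rw [h0] at hξv ⊢
    exact eq_zero_of_tle_zero hξv)
  obtain ⟨b, hb⟩ := TropSemifield.exists_inv _ hηv
  have hηbv : η.toFun (b • v) = 1 := by rw [η.map_smul', smul_eq_mul, mul_comm, hb]
  refine ⟨b • v, hηbv, ?_, fun h => hv ?_⟩
  · simpa only [hηbv] using hle (b • v)
  · rw [ξ.map_smul', smul_eq_mul] at h
    calc ξ.toFun v = η.toFun v * (b * ξ.toFun v) := by rw [← mul_assoc, hb, one_mul]
      _ = η.toFun v := by rw [h, mul_one]

/-- If `ξ₁ v < η v = 1` and `ξ₂ w < η w = 1`, a common lower bound `y` of `v`, `w` with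
`1 ≤ η y` gives `1 ≤ ξ₁ v ⊕ ξ₂ w`, while totality makes that sum one of its two summands. -/
theorem LatticePreserving.eq_or_eq_of_add_eq {k M : Type*} [TropSemifield k] [TropSemigroup M]
    [TropModule k M] (hto : TotallyOrderedTSF k) {η : TropHom k M k} (hlat : LatticePreserving η)
    {ξ₁ ξ₂ : TropHom k M k} (hsum : ξ₁ + ξ₂ = η) : ξ₁ = η ∨ ξ₂ = η := by
  have hpt (u : M) : η.toFun u = ξ₁.toFun u + ξ₂.toFun u := by rw [← hsum]; rfl
  by_contra! ⟨h₁, h₂⟩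
  obtain ⟨v, hηv, hξ₁v⟩ := TropHom.exists_map_eq_one_tlt (fun u => hpt u ▸ tle_add_right _ _) h₁
  obtain ⟨w, hηw, hξ₂w⟩ := TropHom.exists_map_eq_one_tlt (fun u => hpt u ▸ tle_add_left _ _) h₂
  obtain ⟨y, hyv, hyw, hηy⟩ := hlat v w 1 (hηv ▸ tle_refl _) (hηw ▸ tle_refl _)
  have hlt : tlt (ξ₁.toFun v + ξ₂.toFun w) 1 := hto.add_tlt hξ₁v hξ₂w
  have hge : tle 1 (ξ₁.toFun v + ξ₂.toFun w) :=
    tle_trans hηy (hpt y ▸ add_tle_add (ξ₁.tle_map hyv) (ξ₂.tle_map hyw))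
  exact hlt.2 (tle_antisymm hlt.1 hge)

theorem stmt12 {k M : Type*} [TropSemifield k] [TropSemigroup M] [TropModule k M]
    (hto : TotallyOrderedTSF k) (η : TropHom k M k)
    (hlat : LatticePreserving η) (hne : η ≠ 0) :
    TExtremal η :=
  ⟨hne, fun _ _ hsum => hlat.eq_or_eq_of_add_eq hto hsum⟩
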